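/- If X has law ν conditioned on Z (ν atomless, ν(Z)>0), and G(t) = ν(Z ∩ (t, ∞))/ν(Z) is the conditional survival function, then G(X) is uniformly distributed on [0,1]. -/

import Mathlib

open MeasureTheory

lemma survival_key (μ : Measure ℝ) [IsProbabilityMeasure μ] [NullSingletonClass μ]
    (α : ℝ) (h0 : 0 ≤ α) (h1 : α ≤ 1) :
    μ {t | μ (Set.Ioi t) ≤ ENNReal.ofReal α} = ENNReal.ofReal α := by
  set a := ENNReal.ofReal α with ha
  set S := {t | μ (Set.Ioi t) ≤ a} with hSdef
  have hupper : IsUpperSet S := by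
    intro x y hxy hx
    exact le_trans (measure_mono (Set.Ioi_subset_Ioi hxy)) hx
  have ha1 : a ≤ 1 := by
    rw [ha, ← ENNReal.ofReal_one]
    exact ENNReal.ofReal_le_ofReal h1
  rcases Set.eq_empty_or_nonempty S with hemp | hne
  · -- S empty : must have a = 0
    have h0a : a = 0 := by
      have key : μ (⋂ n : ℕ, Set.Ioi (n : ℝ)) = ⨅ n : ℕ, μ (Set.Ioi (n : ℝ)) := by
        refine Directed.measure_iInter
          (fun n => (measurableSet_Ioi).nullMeasurableSet)
          (fun m n => ⟨max m n, Set.Ioi_subset_Ioi (by exact_mod_cast le_max_left m n),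
            Set.Ioi_subset_Ioi (by exact_mod_cast le_max_right m n)⟩) ⟨0, measure_ne_top _ _⟩
      have hint : (⋂ n : ℕ, Set.Ioi (n : ℝ)) = ∅ := by
        ext x
        simp only [Set.mem_iInter, Set.mem_Ioi, Set.mem_empty_iff_false, iff_false, not_forall,
          not_lt]
        obtain ⟨n, hn⟩ := exists_nat_gt x
        exact ⟨n, hn.le⟩
      have hz : (⨅ n : ℕ, μ (Set.Ioi (n : ℝ))) = 0 := by rw [← key, hint, measure_empty]
      have hle : a ≤ ⨅ n : ℕ, μ (Set.Ioi (n : ℝ)) := by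
        refine le_iInf fun n => ?_
        have hns : (n : ℝ) ∉ S := by rw [hemp]; exact Set.notMem_empty _
        exact le_of_not_ge hns
      exact le_antisymm (hz ▸ hle) zero_le
    rw [hemp, measure_empty, h0a]
  · by_cases huniv : S = Set.univ
    · -- S = univ : a = 1
      have key : μ (⋃ n : ℕ, Set.Ioi (-(n : ℝ))) = ⨆ n : ℕ, μ (Set.Ioi (-(n : ℝ))) := by
        refine Directed.measure_iUnion
          (fun m n => ⟨max m n, Set.Ioi_subset_Ioi (by simp), Set.Ioi_subset_Ioi (by simp)⟩)
      have hun : (⋃ n : ℕ, Set.Ioi (-(n : ℝ))) = Set.univ := by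
        ext x
        simp only [Set.mem_iUnion, Set.mem_Ioi, Set.mem_univ, iff_true]
        obtain ⟨n, hn⟩ := exists_nat_gt (-x)
        exact ⟨n, by linarith⟩
      have h1a : (1 : ENNReal) ≤ a := by
        have hμu : μ Set.univ = ⨆ n : ℕ, μ (Set.Ioi (-(n : ℝ))) := by rw [← hun, key]
        rw [measure_univ] at hμu
        rw [hμu]
        exact iSup_le fun n => (huniv ▸ Set.mem_univ (-(n : ℝ)) : (-(n : ℝ)) ∈ S)
      have haeq : a = 1 := le_antisymm ha1 h1a
      rw [huniv, measure_univ, haeq]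
    · -- general case
      obtain ⟨t₀, ht₀⟩ : ∃ t, t ∉ S := by
        by_contra h
        push_neg at h
        exact huniv (Set.eq_univ_of_forall h)
      have hbdd : BddBelow S := ⟨t₀, fun s hs => le_of_not_ge fun h => ht₀ (hupper h hs)⟩
      set c := sInf S with hc
      have hSub : S ⊆ Set.Ici c := fun x hx => csInf_le hbdd hx
      have hIoiS : Set.Ioi c ⊆ S := by
        intro x hx
        obtain ⟨s, hs, hsx⟩ := exists_lt_of_csInf_lt hne hx
        exact hupper hsx.le hs
      -- μ (Ioi c) ≤ a
      have hIoi_le : μ (Set.Ioi c) ≤ a := by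
        have hun : Set.Ioi c = ⋃ n : ℕ, Set.Ioi (c + 1 / ((n : ℝ) + 1)) := by
          ext x
          simp only [Set.mem_Ioi, Set.mem_iUnion]
          constructor
          · intro hx
            obtain ⟨n, hn⟩ := exists_nat_one_div_lt (sub_pos.mpr hx)
            exact ⟨n, by linarith⟩
          · rintro ⟨n, hn⟩
            have hp : (0:ℝ) < 1 / ((n:ℝ) + 1) := by positivity
            linarith
        have key : μ (⋃ n : ℕ, Set.Ioi (c + 1 / ((n : ℝ) + 1))) =
            ⨆ n : ℕ, μ (Set.Ioi (c + 1 / ((n : ℝ) + 1))) := by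
          exact Directed.measure_iUnion (fun m n => ⟨max m n,
            Set.Ioi_subset_Ioi (by gcongr; exact_mod_cast le_max_left m n),
            Set.Ioi_subset_Ioi (by gcongr; exact_mod_cast le_max_right m n)⟩)
        rw [hun, key]
        refine iSup_le fun n => ?_
        refine hIoiS ?_
        have hp : (0:ℝ) < 1 / ((n:ℝ) + 1) := by positivity
        simpa using hp
      -- a ≤ μ (Ici c)
      have hIci_ge : a ≤ μ (Set.Ici c) := by
        have hin : Set.Ici c = ⋂ n : ℕ, Set.Ioi (c - 1 / ((n : ℝ) + 1)) := by
          ext x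
          simp only [Set.mem_Ici, Set.mem_iInter, Set.mem_Ioi]
          constructor
          · intro hx n
            have hp : (0:ℝ) < 1 / ((n:ℝ) + 1) := by positivity
            linarith
          · intro h
            by_contra hxc
            push_neg at hxc
            obtain ⟨n, hn⟩ := exists_nat_one_div_lt (sub_pos.mpr hxc)
            have := h n
            linarith
        have key : μ (⋂ n : ℕ, Set.Ioi (c - 1 / ((n : ℝ) + 1))) =
            ⨅ n : ℕ, μ (Set.Ioi (c - 1 / ((n : ℝ) + 1))) := by
          exact Directed.measure_iInter
            (fun n => measurableSet_Ioi.nullMeasurableSet)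
            (fun m n => ⟨max m n,
              Set.Ioi_subset_Ioi (by gcongr <;> exact_mod_cast le_max_left m n),
              Set.Ioi_subset_Ioi (by gcongr <;> exact_mod_cast le_max_right m n)⟩)
            ⟨0, measure_ne_top _ _⟩
        rw [hin, key]
        refine le_iInf fun n => ?_
        have hnot : c - 1 / ((n : ℝ) + 1) ∉ S := by
          intro hmem
          have h1 : c ≤ c - 1 / ((n : ℝ) + 1) := csInf_le hbdd hmem
          have hp : (0:ℝ) < 1 / ((n:ℝ) + 1) := by positivity
          linarith
        exact le_of_not_ge hnot
      have heq : μ (Set.Ici c) = μ (Set.Ioi c) := (measure_congr (MeasureTheory.Ioi_ae_eq_Ici (μ := μ) (a := c))).symm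
      have hval : μ (Set.Ioi c) = a := le_antisymm hIoi_le (heq ▸ hIci_ge)
      by_cases hcS : c ∈ S
      · have hSeq : S = Set.Ici c := by
          refine Set.Subset.antisymm hSub fun x hx => hupper hx hcS
        rw [hSeq, heq, hval]
      · have hSeq : S = Set.Ioi c := by
          refine Set.Subset.antisymm (fun x hx => ?_) hIoiS
          rcases lt_or_eq_of_le (Set.mem_Ici.mp (hSub hx)) with h | h
          · exact h
          · exact absurd (h ▸ hx) hcS
        rw [hSeq, hval]

/-- If `X` has the conditional law `ν(· ∩ Z)/ν(Z)` with `ν` atomless, and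
`G(t) = ν(Z ∩ (t, ∞))/ν(Z)` is the conditional survival function, then `G(X)`
is uniformly distributed on `[0,1]`. -/
theorem survival_transform_uniform {Ω : Type*} [MeasurableSpace Ω]
    (ℙ : Measure Ω) [IsProbabilityMeasure ℙ]
    (ν : Measure ℝ) [IsProbabilityMeasure ν] [NullSingletonClass ν]
    (Z : Set ℝ) (hZ : MeasurableSet Z) (hpos : ν Z ≠ 0)
    (X : Ω → ℝ) (hX : Measurable X)
    (hlaw : Measure.map X ℙ = (ν Z)⁻¹ • ν.restrict Z)
    (G : ℝ → ℝ) (hG : ∀ t, G t = (ν (Z ∩ Set.Ioi t)).toReal / (ν Z).toReal) :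
    ∀ α ∈ Set.Icc (0 : ℝ) 1, ℙ {ω | G (X ω) ≤ α} = ENNReal.ofReal α := by
  intro α hα
  obtain ⟨h0, h1⟩ := hα
  set μ : Measure ℝ := (ν Z)⁻¹ • ν.restrict Z with hμ
  have hZfin : ν Z ≠ ⊤ := measure_ne_top ν Z
  have hμprob : IsProbabilityMeasure μ := by
    constructor
    rw [hμ]
    simp only [Measure.smul_apply, Measure.restrict_apply MeasurableSet.univ, Set.univ_inter,
      smul_eq_mul]
    exact ENNReal.inv_mul_cancel hpos hZfin
  have hμatomless : NullSingletonClass μ := by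
    constructor
    intro x
    rw [hμ]
    simp only [Measure.smul_apply, smul_eq_mul]
    rw [Measure.restrict_apply (measurableSet_singleton x)]
    have : ν ({x} ∩ Z) ≤ ν {x} := measure_mono Set.inter_subset_left
    rw [measure_singleton] at this
    rw [le_zero_iff.mp this, mul_zero]
  -- G t = (μ (Ioi t)).toReal
  have hGμ : ∀ t, G t = (μ (Set.Ioi t)).toReal := by
    intro t
    rw [hG, hμ]
    simp only [Measure.smul_apply, smul_eq_mul]
    rw [Measure.restrict_apply measurableSet_Ioi, Set.inter_comm]
    rw [ENNReal.toReal_mul, ENNReal.toReal_inv]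
    ring
  have hμfin : ∀ t, μ (Set.Ioi t) ≠ ⊤ := fun t => measure_ne_top μ _
  set S := {t | μ (Set.Ioi t) ≤ ENNReal.ofReal α} with hSdef
  have hSet : {ω | G (X ω) ≤ α} = X ⁻¹' S := by
    ext ω
    simp only [Set.mem_setOf_eq, Set.mem_preimage, hSdef, Set.mem_setOf_eq]
    rw [hGμ, ENNReal.le_ofReal_iff_toReal_le (hμfin _) h0]
  have hSupper : IsUpperSet S := fun x y hxy hx =>
    le_trans (measure_mono (Set.Ioi_subset_Ioi hxy)) hx
  have hSmeas : MeasurableSet S := hSupper.ordConnected.measurableSet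
  rw [hSet, ← Measure.map_apply hX hSmeas, hlaw]
  exact survival_key μ α h0 h1
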